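/- arXiv:1811.03185 — 4 statements merged into one kernel-verified Lean document; each statement's English description precedes it below -/
import Mathlib

section
/- Let A be a finite alphabet, let X ⊆ A⁺, and let w ∈ A*. Then δ_X(w) is greater than or equal to the number of prefixes of w that have no suffix in X. If moreover X is a prefix code, then δ_X(w) is equal to the number of prefixes of w that have no suffix in X. -/
/-! Common definitions: words over a finite alphabet `A` are terms of `List A`,
concatenation being the monoid operation of the free monoid `A*`. -/

namespace PaperDefs

variable {A : Type*}

/-- `w` belongs to the Kleene star `X*` of `X`: it is a (possibly empty)
concatenation of elements of `X`. -/
def InStar (X : Set (List A)) (w : List A) : Prop :=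
  ∃ l : List (List A), (∀ u ∈ l, u ∈ X) ∧ l.flatten = w

/-- The language `X*`. -/
def star (X : Set (List A)) : Set (List A) := {w | InStar X w}

/-- A prefix code: a nonempty set of nonempty words, none of which is a proper
prefix of another. -/
def IsPrefixCode (X : Set (List A)) : Prop :=
  X.Nonempty ∧ (∀ w ∈ X, w ≠ []) ∧ ∀ u ∈ X, ∀ v ∈ X, u <+: v → u = v

/-- A suffix code. -/
def IsSuffixCode (X : Set (List A)) : Prop :=
  X.Nonempty ∧ (∀ w ∈ X, w ≠ []) ∧ ∀ u ∈ X, ∀ v ∈ X, u <:+ v → u = v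

/-- A bifix code. -/
def IsBifixCode (X : Set (List A)) : Prop := IsPrefixCode X ∧ IsSuffixCode X

/-- A factorial set contains all factors of its elements. -/
def Factorial (F : Set (List A)) : Prop := ∀ w ∈ F, ∀ u, u <:+: w → u ∈ F

/-- A recurrent set. -/
def Recurrent (F : Set (List A)) : Prop :=
  Factorial F ∧ F.Nonempty ∧ F ≠ {[]} ∧ ∀ u ∈ F, ∀ v ∈ F, ∃ w, u ++ w ++ v ∈ F

/-- A uniformly recurrent set. -/
def UniformlyRecurrent (F : Set (List A)) : Prop :=
  Recurrent F ∧ ∀ u ∈ F, ∃ n : ℕ, ∀ w ∈ F, n ≤ w.length → u <:+: w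

/-- A parse of `w` with respect to `X` : a triple `(v, x, u)` with `w = v x u`,
`v` has no suffix in `X`, `x ∈ X*`, and `u` has no prefix in `X`. -/
def IsParse (X : Set (List A)) (w : List A) (p : List A × List A × List A) : Prop :=
  p.1 ++ p.2.1 ++ p.2.2 = w ∧ (¬ ∃ s ∈ X, s <:+ p.1) ∧ InStar X p.2.1 ∧
    ¬ ∃ s ∈ X, s <+: p.2.2

/-- `δ_X(w)`, the number of parses of `w` with respect to `X`. -/
noncomputable def delta (X : Set (List A)) (w : List A) : ℕ :=
  {p | IsParse X w p}.ncard

/-- The `F`-degree `d_F(X)` of `X`, as an extended natural number. -/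
noncomputable def Fdeg (X F : Set (List A)) : ℕ∞ :=
  ⨆ w ∈ F, (delta X w : ℕ∞)

/-- The degree `d(X)` of `X`. -/
noncomputable def deg (X : Set (List A)) : ℕ∞ := Fdeg X Set.univ

/-- An `F`-maximal bifix code. -/
def IsFMaximalBifixCode (F X : Set (List A)) : Prop :=
  IsBifixCode X ∧ X ⊆ F ∧ ∀ Y : Set (List A), IsBifixCode Y → Y ⊆ F → X ⊆ Y → Y = X

/-- An `F`-maximal prefix code. -/
def IsFMaximalPrefixCode (F X : Set (List A)) : Prop :=
  IsPrefixCode X ∧ X ⊆ F ∧ ∀ Y : Set (List A), IsPrefixCode Y → Y ⊆ F → X ⊆ Y → Y = X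

/-- `X` is `F`-thin: some word of `F` is not a factor of any element of `X`. -/
def FThin (F X : Set (List A)) : Prop := ∃ w ∈ F, ∀ x ∈ X, ¬ w <:+: x

/-- A rational (regular) language. -/
def IsRational (L : Set (List A)) : Prop :=
  ∃ (σ : Type) (_ : Fintype σ) (M : DFA A σ), ∀ w : List A, w ∈ M.accepts ↔ w ∈ L

/-- The syntactic congruence of the language `L`. -/
def SynEquiv (L : Set (List A)) (u v : List A) : Prop :=
  ∀ x y : List A, x ++ u ++ y ∈ L ↔ x ++ v ++ y ∈ L

/-- `η : A* → M` is (a realization of) the syntactic homomorphism onto the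
syntactic monoid of `L`. -/
structure IsSyntacticHom (L : Set (List A)) {M : Type*} [Monoid M] (η : List A → M) : Prop where
  map_nil : η [] = 1
  map_append : ∀ u v : List A, η (u ++ v) = η u * η v
  surj : Function.Surjective η
  syn : ∀ u v : List A, η u = η v ↔ SynEquiv L u v

section Green

variable {M : Type*} [Monoid M]

/-- The `J`-order: `MuM ⊆ MvM`. -/
def JLe (u v : M) : Prop := ∃ x y, u = x * v * y

/-- Green's relation `J`. -/
def JEquiv (u v : M) : Prop := JLe u v ∧ JLe v u

/-- Green's relation `R`. -/
def REquiv (u v : M) : Prop := (∃ x, v = u * x) ∧ (∃ x, u = v * x)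

/-- Green's relation `L`. -/
def LEquiv (u v : M) : Prop := (∃ x, v = x * u) ∧ (∃ x, u = x * v)

/-- Green's relation `H`. -/
def HEquiv (u v : M) : Prop := REquiv u v ∧ LEquiv u v

/-- Green's relation `D`. -/
def DEquiv (u v : M) : Prop := ∃ s, REquiv u s ∧ LEquiv s v

/-- The `H`-class of an element. -/
def HClass (e : M) : Set M := {m | HEquiv m e}

/-- Membership in the minimum ideal (minimum `J`-class) of `M`. -/
def InMinIdeal (m : M) : Prop := ∀ n : M, JLe m n

/-- `S` is a subgroup of the monoid `M`: a subsemigroup which is a group. -/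
def IsSubgroupIn (S : Set M) : Prop :=
  S.Nonempty ∧ (∀ x ∈ S, ∀ y ∈ S, x * y ∈ S) ∧
    ∃ e ∈ S, (∀ x ∈ S, e * x = x ∧ x * e = x) ∧ ∀ x ∈ S, ∃ y ∈ S, x * y = e ∧ y * x = e

/-- The subsets `S ⊆ M` and `T ⊆ N` (each closed under multiplication, e.g.
maximal subgroups) are isomorphic as groups: there is a multiplicative
bijection from `S` onto `T`. -/
def GroupIsoOn {N : Type*} [Monoid N] (S : Set M) (T : Set N) : Prop :=
  ∃ φ : M → N, Set.BijOn φ S T ∧ ∀ x ∈ S, ∀ y ∈ S, φ (x * y) = φ x * φ y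

end Green

/-- `m` belongs to `J_F(X)`, the minimum `J`-class of the syntactic monoid of
`X*` meeting the image of `F` under the syntactic homomorphism `η`. -/
def InFMinJ {M : Type*} [Monoid M] (η : List A → M) (F : Set (List A)) (m : M) : Prop :=
  (∃ w ∈ F, JEquiv m (η w)) ∧ ∀ w ∈ F, JLe m (η w)

/-- A group code: a prefix code `Z` defined by a transitive permutation
representation of `A*` on a finite set, `Z*` being the stabilizer of a point. -/
def IsGroupCode (Z : Set (List A)) : Prop :=
  IsPrefixCode Z ∧
  ∃ (Q : Type) (_ : Fintype Q) (q₀ : Q) (α : List A → Equiv.Perm Q),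
    α [] = 1 ∧ (∀ u v : List A, α (u ++ v) = α u * α v) ∧
    (∀ q q' : Q, ∃ w : List A, α w q = q') ∧
    (∀ w : List A, InStar Z w ↔ α w q₀ = q₀) ∧
    Z = {w : List A | α w q₀ = q₀ ∧ w ≠ [] ∧
          ¬ ∃ u v : List A, u ≠ [] ∧ v ≠ [] ∧ α u q₀ = q₀ ∧ α v q₀ = q₀ ∧ w = u ++ v}

/-- Vertices of the extension graph of `w` in `F`: the disjoint union of
`L(w)` and `R(w)`. -/
def ExtVertex (F : Set (List A)) (w : List A) : Sum A A → Prop :=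
  fun x => Sum.elim (fun a => a :: w ∈ F) (fun b => w ++ [b] ∈ F) x

/-- The edge relation of the extension graph of `w` in `F`. -/
def ExtRel (F : Set (List A)) (w : List A) : Sum A A → Sum A A → Prop :=
  fun x y =>
    match x, y with
    | Sum.inl a, Sum.inr b => a :: (w ++ [b]) ∈ F
    | _, _ => False

/-- The extension graph `G(w)` of `w` in `F`. -/
def extGraph (F : Set (List A)) (w : List A) :
    SimpleGraph {x : Sum A A // ExtVertex F w x} :=
  SimpleGraph.fromRel fun x y => ExtRel F w x.1 y.1

/-- `F` is connected: every extension graph of a word of `F` is connected. -/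
def ConnectedSet (F : Set (List A)) : Prop :=
  ∀ w ∈ F, (extGraph F w).Connected

/-- `F` is a tree set: every extension graph of a word of `F` is a tree. -/
def TreeSet (F : Set (List A)) : Prop :=
  ∀ w ∈ F, (extGraph F w).IsTree

/-- The alphabet of `F` is the whole of `A`. -/
def AlphabetIs (F : Set (List A)) : Prop := ∀ a : A, [a] ∈ F

/-- The left quotient `u⁻¹L`, i.e. the state reached from the initial state of
the minimal automaton of `L` by reading `u`. -/
def leftQuot (L : Set (List A)) (u : List A) : Set (List A) := {w | u ++ w ∈ L}

/-- The set of states of the minimal automaton of `L`: the nonempty left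
quotients of `L`. -/
def MinStates (L : Set (List A)) : Set (Set (List A)) :=
  {q | q.Nonempty ∧ ∃ u : List A, q = leftQuot L u}

/-- The (partial) transition of the minimal automaton: `q · v`; it is defined
when the resulting set is nonempty. -/
def stepW (q : Set (List A)) (v : List A) : Set (List A) := {w | v ++ w ∈ q}

/-- The rank of the word `v` in the minimal automaton of `L`: the number of
distinct states `q · v` with `q` a state such that `q · v` is defined. -/
noncomputable def wordRank (L : Set (List A)) (v : List A) : ℕ :=
  ((fun q => stepW q v) '' {q ∈ MinStates L | (stepW q v).Nonempty}).ncard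

/-- The set of first return words of `F` to `u`. -/
def ReturnWords (F : Set (List A)) (u : List A) : Set (List A) :=
  {v | v ≠ [] ∧ u ++ v ∈ F ∧ u <:+ u ++ v ∧
    ¬ ∃ x y : List A, x ≠ [] ∧ y ≠ [] ∧ u ++ v = x ++ u ++ y}

/-- A code: every word has at most one factorization into elements of `X`. -/
def IsCode (X : Set (List A)) : Prop :=
  ∀ l m : List (List A), (∀ u ∈ l, u ∈ X) → (∀ u ∈ m, u ∈ X) →
    l.flatten = m.flatten → l = m

/-- The set `I = Q_X · K` of images of states of the minimal automaton of `L`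
under (partial) transitions by words whose syntactic image lies in `K`. -/
def ImageSet (L : Set (List A)) {M : Type*} [Monoid M] (η : List A → M) (K : Set M) :
    Set (Set (List A)) :=
  {p | ∃ q ∈ MinStates L, ∃ v : List A, η v ∈ K ∧ (stepW q v).Nonempty ∧ p = stepW q v}

/-- A witness for "a finite monoid `M` together with a monoid homomorphism
`A* → M`". -/
structure FiniteMonoidHomWitness (A : Type*) where
  M : Type
  [fin : Fintype M]
  [mon : Monoid M]
  φ : List A → M
  map_nil : φ [] = 1
  map_append : ∀ u v : List A, φ (u ++ v) = φ u * φ v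

end PaperDefs

section Aux
open PaperDefs
variable {A : Type}

/-- Every word splits as an `X*` part followed by a part with no prefix in `X`. -/
lemma exists_split (X : Set (List A)) (hX : ∀ x ∈ X, x ≠ []) (z : List A) :
    ∃ x u : List A, InStar X x ∧ (¬ ∃ s ∈ X, s <+: u) ∧ x ++ u = z := by
  have main : ∀ n (z : List A), z.length ≤ n →
      ∃ x u : List A, InStar X x ∧ (¬ ∃ s ∈ X, s <+: u) ∧ x ++ u = z := by
    intro n
    induction n with
    | zero =>
      intro z hz
      have : z = [] := List.eq_nil_of_length_eq_zero (Nat.le_zero.mp hz)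
      subst this
      by_cases h : ∃ s ∈ X, s <+: ([] : List A)
      · obtain ⟨s, hs, hps⟩ := h
        exact absurd (List.prefix_nil.mp hps) (hX s hs)
      · exact ⟨[], [], ⟨[], by simp, rfl⟩, h, rfl⟩
    | succ n ih =>
      intro z hz
      by_cases h : ∃ s ∈ X, s <+: z
      · obtain ⟨s, hs, z', rfl⟩ := h
        have hslen : 1 ≤ s.length := by
          have := hX s hs
          cases s with
          | nil => exact absurd rfl this
          | cons a t => simp
        have hz' : z'.length ≤ n := by
          have : s.length + z'.length ≤ n + 1 := by simpa using hz
          omega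
        obtain ⟨x, u, ⟨l, hl, hfl⟩, hu, hxu⟩ := ih z' hz'
        refine ⟨s ++ x, u, ⟨s :: l, ?_, by simp [hfl]⟩, hu, by simp [hxu]⟩
        intro a ha
        rcases List.mem_cons.mp ha with rfl | ha
        · exact hs
        · exact hl a ha
      · exact ⟨[], z, ⟨[], by simp, rfl⟩, h, rfl⟩
  exact main z.length z le_rfl

/-- Under a prefix code, the `X*` part of such a split is unique. -/
lemma split_unique (X : Set (List A)) (hpc : IsPrefixCode X) :
    ∀ (l l' : List (List A)) (u u' : List A), (∀ a ∈ l, a ∈ X) → (∀ a ∈ l', a ∈ X) →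
      (¬ ∃ s ∈ X, s <+: u) → (¬ ∃ s ∈ X, s <+: u') →
      l.flatten ++ u = l'.flatten ++ u' → l.flatten = l'.flatten := by
  intro l
  induction l with
  | nil =>
    intro l' u u' hl hl' hu hu' heq
    cases l' with
    | nil => rfl
    | cons b t =>
      exfalso
      apply hu
      refine ⟨b, hl' b (by simp), ?_⟩
      simp only [List.flatten_nil, List.nil_append, List.flatten_cons] at heq
      exact ⟨t.flatten ++ u', by rw [heq]; simp⟩
  | cons a t ih =>
    intro l' u u' hl hl' hu hu' heq
    cases l' with
    | nil =>
      exfalso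
      apply hu'
      refine ⟨a, hl a (by simp), ?_⟩
      simp only [List.flatten_nil, List.nil_append, List.flatten_cons] at heq
      exact ⟨t.flatten ++ u, by rw [← heq]; simp⟩
    | cons b t' =>
      have ha : a ∈ X := hl a (by simp)
      have hb : b ∈ X := hl' b (by simp)
      simp only [List.flatten_cons, List.append_assoc] at heq
      have hpa : a <+: a ++ (t.flatten ++ u) := ⟨_, rfl⟩
      have hpb : b <+: a ++ (t.flatten ++ u) := by
        rw [heq]; exact ⟨_, rfl⟩
      have hab : a = b := by
        rcases List.prefix_or_prefix_of_prefix hpa hpb with h | h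
        · exact hpc.2.2 a ha b hb h
        · exact (hpc.2.2 b hb a ha h).symm
      subst hab
      have heq' : t.flatten ++ u = t'.flatten ++ u' :=
        List.append_cancel_left heq
      have := ih t' u u' (fun x hx => hl x (by simp [hx]))
        (fun x hx => hl' x (by simp [hx])) hu hu' heq'
      simp [List.flatten_cons, this]

lemma parse_finite (X : Set (List A)) (w : List A) :
    {p : List A × List A × List A | IsParse X w p}.Finite := by
  have hsub : {p : List A × List A × List A | IsParse X w p} ⊆
      {p | p.1 ++ p.2.1 ++ p.2.2 = w} := fun p hp => hp.1
  refine Set.Finite.subset ?_ hsub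
  set f : List A × List A × List A → ℕ × ℕ := fun p => (p.1.length, p.2.1.length)
  have hinj : Set.InjOn f {p | p.1 ++ p.2.1 ++ p.2.2 = w} := by
    rintro ⟨a, b, c⟩ hp ⟨a', b', c'⟩ hq hfeq
    simp only [Set.mem_setOf_eq] at hp hq
    simp only [f, Prod.mk.injEq] at hfeq
    rw [List.append_assoc] at hp hq
    have h1 := List.append_inj (hp.trans hq.symm) hfeq.1
    have h2 := List.append_inj h1.2 hfeq.2
    simp [h1.1, h2.1, h2.2]
  refine Set.Finite.of_finite_image ?_ hinj
  refine Set.Finite.subset (Set.finite_Iic (w.length, w.length)) ?_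
  rintro ⟨m, n⟩ ⟨⟨a, b, c⟩, hp, hfeq⟩
  simp only [Set.mem_setOf_eq] at hp
  simp only [f, Prod.mk.injEq] at hfeq
  have : a.length + b.length + c.length = w.length := by
    rw [← hp]; simp [List.length_append]; omega
  simp only [Set.mem_Iic, Prod.mk_le_mk]
  omega

end Aux

open PaperDefs in
theorem stmt_14 {A : Type} [Fintype A]
    (X : Set (List A)) (hX : ∀ x ∈ X, x ≠ []) (w : List A) :
    {v : List A | v <+: w ∧ ¬ ∃ s ∈ X, s <:+ v}.ncard ≤ delta X w ∧
    (IsPrefixCode X →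
      delta X w = {v : List A | v <+: w ∧ ¬ ∃ s ∈ X, s <:+ v}.ncard) := by
  classical
  have hfin := parse_finite X w
  have himg : Prod.fst '' {p : List A × List A × List A | IsParse X w p}
      = {v : List A | v <+: w ∧ ¬ ∃ s ∈ X, s <:+ v} := by
    ext v
    constructor
    · rintro ⟨p, hp, rfl⟩
      obtain ⟨heq, hsuf, _, _⟩ := hp
      exact ⟨⟨p.2.1 ++ p.2.2, by rw [← heq]; simp⟩, hsuf⟩
    · rintro ⟨⟨z, rfl⟩, hv⟩
      obtain ⟨x, u, hx, hu, hxu⟩ := exists_split X hX z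
      exact ⟨(v, x, u), ⟨by simp [hxu], hv, hx, hu⟩, rfl⟩
  constructor
  · rw [← himg]
    exact Set.ncard_image_le hfin
  · intro hpc
    have hinj : Set.InjOn Prod.fst {p : List A × List A × List A | IsParse X w p} := by
      rintro ⟨v, x, u⟩ hp ⟨v', x', u'⟩ hq hfeq
      simp only at hfeq
      subst hfeq
      obtain ⟨heq, _, ⟨l, hl, hfl⟩, hu⟩ := hp
      obtain ⟨heq', _, ⟨l', hl', hfl'⟩, hu'⟩ := hq
      rw [List.append_assoc] at heq heq'
      have hcancel : x ++ u = x' ++ u' :=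
        List.append_cancel_left (heq.trans heq'.symm)
      subst hfl hfl'
      have hx : l.flatten = l'.flatten :=
        split_unique X hpc l l' u u' hl hl' hu hu' hcancel
      have hu'' : u = u' := by
        rw [hx] at hcancel
        exact List.append_cancel_left hcancel
      simp [hx, hu'']
    rw [delta, ← himg, Set.ncard_image_of_injOn hinj]
end

section
/- Let A be a finite alphabet. Every rational code X ⊆ A⁺ is thin, i.e., there exists a word of A* that is not a factor of any element of X. -/
section ThinAux

variable {N : Type*} [Monoid N] [Finite N]

/-- In a finite monoid every element has an idempotent power. -/
lemma thin_aux_idem_pow (a : N) : ∃ k, 1 ≤ k ∧ a ^ k * a ^ k = a ^ k := by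
  obtain ⟨i, j, hij, hpow⟩ := Finite.exists_ne_map_eq_of_infinite (fun k : ℕ => a ^ k)
  wlog hlt : i < j generalizing i j
  · exact this j i hij.symm hpow.symm (by omega)
  have hd : 1 ≤ j - i := by omega
  set d := j - i with hdd
  have hstep : ∀ t, a ^ (i + t + d) = a ^ (i + t) := by
    intro t
    induction t with
    | zero =>
      have h1 : i + 0 + d = j := by omega
      have h2 : i + 0 = i := by omega
      rw [h1, h2]; exact hpow.symm
    | succ t ih =>
      have h1 : i + (t + 1) + d = (i + t + d) + 1 := by omega
      have h2 : i + (t + 1) = (i + t) + 1 := by omega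
      rw [h1, h2, pow_succ, pow_succ, ih]
  have hrep : ∀ m t, a ^ (i + t + m * d) = a ^ (i + t) := by
    intro m
    induction m with
    | zero => intro t; simp
    | succ m ih =>
      intro t
      have h1 : i + t + (m + 1) * d = i + (t + m * d) + d := by
        rw [Nat.succ_mul]; omega
      rw [h1, hstep (t + m * d)]
      have h2 : i + (t + m * d) = i + t + m * d := by omega
      rw [h2, ih t]
  set K := (i + 1) * d with hKK
  have hKi : i + 1 ≤ K := by
    calc i + 1 = (i + 1) * 1 := by ring
    _ ≤ (i + 1) * d := Nat.mul_le_mul_left (i + 1) hd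
  refine ⟨K, by omega, ?_⟩
  rw [← pow_add]
  have h1 : K + K = i + (K - i) + (i + 1) * d := by rw [← hKK]; omega
  rw [h1, hrep (i + 1) (K - i)]
  congr 1
  omega

lemma thin_aux_pow_eq (e c : N) (hee : e * e = e) (hec : e * c = c) (hce : c * e = c)
    (hin : ∃ x y : N, x * c * y = e) : ∃ n, 1 ≤ n ∧ c ^ n = e := by
  obtain ⟨x, y, hxy⟩ := hin
  obtain ⟨p, hp⟩ : ∃ p, p = e * x * e := ⟨_, rfl⟩
  obtain ⟨q, hq⟩ : ∃ q, q = e * y * e := ⟨_, rfl⟩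
  obtain ⟨s, hs⟩ : ∃ s, s = c * q := ⟨_, rfl⟩
  have heq' : e * q = q := by
    rw [hq, ← mul_assoc e (e * y) e, ← mul_assoc e e y, hee]
  have hcq : s = c * y * e := by
    rw [hs, hq, ← mul_assoc c (e * y) e, ← mul_assoc c e y, hce]
  have hps : p * s = e := by
    rw [hcq, hp]
    rw [← mul_assoc (e * x * e) (c * y) e]
    rw [mul_assoc (e * x) e (c * y)]
    rw [← mul_assoc e c y, hec]
    rw [← mul_assoc (e * x) c y]
    rw [mul_assoc e x c]
    rw [mul_assoc e (x * c) y]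
    rw [hxy, hee, hee]
  have hes : e * s = s := by rw [hs, ← mul_assoc, hec]
  have hesn : ∀ m : ℕ, e * s ^ (m + 1) = s ^ (m + 1) := by
    intro m; rw [pow_succ', ← mul_assoc, hes, ← pow_succ']
  have hpsn : ∀ m : ℕ, p ^ (m + 1) * s ^ (m + 1) = e := by
    intro m
    induction m with
    | zero => simpa using hps
    | succ m ih =>
      rw [pow_succ p (m + 1), pow_succ' s (m + 1)]
      rw [mul_assoc (p ^ (m + 1)) p (s * s ^ (m + 1))]
      rw [← mul_assoc p s (s ^ (m + 1)), hps, hesn m]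
      exact ih
  obtain ⟨k, hk1, hkk⟩ := thin_aux_idem_pow s
  obtain ⟨k', rfl⟩ : ∃ t, k = t + 1 := ⟨k - 1, by omega⟩
  have hske : s ^ (k' + 1) = e := by
    calc s ^ (k' + 1) = e * s ^ (k' + 1) := (hesn k').symm
      _ = (p ^ (k' + 1) * s ^ (k' + 1)) * s ^ (k' + 1) := by rw [hpsn k']
      _ = p ^ (k' + 1) * (s ^ (k' + 1) * s ^ (k' + 1)) := by rw [mul_assoc]
      _ = p ^ (k' + 1) * s ^ (k' + 1) := by rw [hkk]
      _ = e := hpsn k'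
  obtain ⟨r, hr⟩ : ∃ r, r = q * s ^ k' := ⟨_, rfl⟩
  have hcr : c * r = e := by
    rw [hr, ← mul_assoc c q (s ^ k'), ← hs, ← pow_succ' s k', hske]
  have her : e * r = r := by rw [hr, ← mul_assoc e q (s ^ k'), heq']
  have hern : ∀ m : ℕ, e * r ^ (m + 1) = r ^ (m + 1) := by
    intro m; rw [pow_succ', ← mul_assoc, her, ← pow_succ']
  have hcen : ∀ m : ℕ, c ^ (m + 1) * e = c ^ (m + 1) := by
    intro m; rw [pow_succ, mul_assoc, hce, ← pow_succ]
  have hcrn : ∀ m : ℕ, c ^ (m + 1) * r ^ (m + 1) = e := by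
    intro m
    induction m with
    | zero => simpa using hcr
    | succ m ih =>
      rw [pow_succ c (m + 1), pow_succ' r (m + 1)]
      rw [mul_assoc (c ^ (m + 1)) c (r * r ^ (m + 1))]
      rw [← mul_assoc c r (r ^ (m + 1)), hcr, hern m]
      exact ih
  obtain ⟨k₃, hk31, hk3k⟩ := thin_aux_idem_pow c
  obtain ⟨k₃', rfl⟩ : ∃ t, k₃ = t + 1 := ⟨k₃ - 1, by omega⟩
  refine ⟨k₃' + 1, by omega, ?_⟩
  calc c ^ (k₃' + 1) = c ^ (k₃' + 1) * e := (hcen k₃').symm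
    _ = c ^ (k₃' + 1) * (c ^ (k₃' + 1) * r ^ (k₃' + 1)) := by rw [hcrn k₃']
    _ = (c ^ (k₃' + 1) * c ^ (k₃' + 1)) * r ^ (k₃' + 1) := by rw [mul_assoc]
    _ = c ^ (k₃' + 1) * r ^ (k₃' + 1) := by rw [hk3k]
    _ = e := hcrn k₃'

lemma thin_aux_min_idem :
    ∃ e : N, e * e = e ∧ ∀ m : N, ∃ n, 1 ≤ n ∧ (e * m * e) ^ n = e := by
  classical
  obtain ⟨a, ha⟩ := Finite.exists_min (fun b : N => {x : N | ∃ u v : N, x = u * b * v}.ncard)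
  have hsub : ∀ b c : N, (∃ u v : N, b = u * c * v) →
      {x : N | ∃ u v : N, x = u * b * v} ⊆ {x : N | ∃ u v : N, x = u * c * v} := by
    rintro b c ⟨u, v, rfl⟩ x ⟨u', v', rfl⟩
    exact ⟨u' * u, v * v', by simp [mul_assoc]⟩
  have hmin : ∀ b : N, (∃ u v : N, b = u * a * v) → ∃ u v : N, a = u * b * v := by
    intro b hb
    have h2 : {x : N | ∃ u v : N, x = u * b * v} = {x : N | ∃ u v : N, x = u * a * v} :=
      Set.eq_of_subset_of_ncard_le (hsub b a hb) (ha b) (Set.toFinite _)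
    have h3 : a ∈ {x : N | ∃ u v : N, x = u * a * v} := ⟨1, 1, by simp⟩
    rw [← h2] at h3
    exact h3
  obtain ⟨k, hk1, hkk⟩ := thin_aux_idem_pow a
  obtain ⟨k', rfl⟩ : ∃ t, k = t + 1 := ⟨k - 1, by omega⟩
  refine ⟨a ^ (k' + 1), hkk, ?_⟩
  intro m
  obtain ⟨e, hedef⟩ : ∃ e, e = a ^ (k' + 1) := ⟨_, rfl⟩
  rw [← hedef]
  have hkk' : e * e = e := by rw [hedef]; exact hkk
  obtain ⟨c, hc⟩ : ∃ c, c = e * m * e := ⟨_, rfl⟩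
  rw [← hc]
  have hec : e * c = c := by
    rw [hc, ← mul_assoc e (e * m) e, ← mul_assoc e e m, hkk']
  have hce : c * e = c := by rw [hc, mul_assoc (e * m) e e, hkk']
  have hcIa : ∃ u v : N, c = u * a * v := by
    refine ⟨e * m * (a ^ k'), 1, ?_⟩
    have h4 : a ^ k' * a * 1 = e := by rw [mul_one, hedef, ← pow_succ]
    rw [hc]
    calc e * m * e = e * m * (a ^ k' * a * 1) := by rw [h4]
      _ = e * m * a ^ k' * a * 1 := by simp [mul_assoc]
  obtain ⟨u, v, hav⟩ := hmin c hcIa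
  have hin : ∃ x y : N, x * c * y = e := by
    refine ⟨a ^ k' * u, v, ?_⟩
    have hh : e = a ^ k' * a := by rw [hedef, pow_succ]
    have h2 : a ^ k' * a = a ^ k' * (u * c * v) := by rw [← hav]
    rw [hh, h2]
    simp [mul_assoc]
  exact thin_aux_pow_eq e c hkk' hec hce hin

end ThinAux

open PaperDefs in
theorem stmt_15 {A : Type} [Fintype A]
    (X : Set (List A)) (hX : ∀ x ∈ X, x ≠ [])
    (hcode : IsCode X) (hrat : IsRational X) :
    ∃ w : List A, ∀ x ∈ X, ¬ w <:+: x := by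
  classical
  by_contra hcon
  push_neg at hcon
  obtain ⟨σ, instσ, MD, hMD⟩ := hrat
  haveI := instσ
  -- the transition monoid morphism
  set φ : List A → (Function.End σ)ᵐᵒᵖ :=
    fun w => MulOpposite.op (fun s => MD.evalFrom s w) with hφ
  have hφnil : φ [] = 1 := rfl
  have hφapp : ∀ u v : List A, φ (u ++ v) = φ u * φ v := by
    intro u v
    apply MulOpposite.unop_injective
    funext s
    exact MD.evalFrom_of_append s u v
  have hkey : ∀ (u w w' v : List A), φ w = φ w' →
      ((u ++ w ++ v ∈ X) ↔ (u ++ w' ++ v ∈ X)) := by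
    intro u w w' v hww
    rw [← hMD, ← hMD, DFA.mem_accepts, DFA.mem_accepts]
    have h0 : φ (u ++ w ++ v) = φ (u ++ w' ++ v) := by
      rw [hφapp, hφapp, hφapp, hφapp, hww]
    have h1 : MD.eval (u ++ w ++ v) = MD.eval (u ++ w' ++ v) :=
      congrFun (congrArg MulOpposite.unop h0) MD.start
    rw [h1]
  -- the finite image submonoid
  haveI : Finite (Function.End σ) := inferInstanceAs (Finite (σ → σ))
  let S : Submonoid (Function.End σ)ᵐᵒᵖ :=
    { carrier := Set.range φ
      one_mem' := ⟨[], hφnil⟩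
      mul_mem' := by rintro _ _ ⟨u, rfl⟩ ⟨v, rfl⟩; exact ⟨u ++ v, hφapp u v⟩ }
  haveI : Finite ((Function.End σ)ᵐᵒᵖ) := Finite.of_equiv _ MulOpposite.opEquiv
  haveI : Finite ↥S := Subtype.finite
  obtain ⟨e, hee, hmin⟩ := thin_aux_min_idem (N := ↥S)
  have he2 : (e : (Function.End σ)ᵐᵒᵖ) ∈ Set.range φ := e.2
  obtain ⟨h, hh⟩ := he2
  -- density applied to the word h
  obtain ⟨x, hxX, ul, vr, huv⟩ := hcon h
  have huhv : ul ++ h ++ vr ∈ X := by rw [huv]; exact hxX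
  obtain ⟨n, hn1, hne⟩ := hmin ⟨φ (vr ++ ul), ⟨vr ++ ul, rfl⟩⟩
  obtain ⟨n₀, rfl⟩ : ∃ t, n = t + 1 := ⟨n - 1, by omega⟩
  -- value form of the key identity
  have hval : (φ h * φ (vr ++ ul) * φ h) ^ (n₀ + 1) = φ h := by
    have h5 := congrArg (Subtype.val) hne
    rw [SubmonoidClass.coe_pow] at h5
    simp only [Submonoid.coe_mul] at h5
    rw [hh]
    exact h5
  have hφg : φ (h ++ (vr ++ ul) ++ h) = φ h * φ (vr ++ ul) * φ h := by
    rw [hφapp, hφapp]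
  have hφrep : ∀ (k : ℕ) (w : List A),
      φ ((List.replicate k w).flatten) = (φ w) ^ k := by
    intro k w
    induction k with
    | zero => simpa using hφnil
    | succ k ih => rw [List.replicate_succ, List.flatten_cons, hφapp, ih, pow_succ']
  -- the two elements of X
  have hZX : ul ++ (List.replicate (n₀ + 1) (h ++ (vr ++ ul) ++ h)).flatten ++ vr ∈ X := by
    refine (hkey ul _ h vr ?_).mpr huhv
    rw [hφrep, hφg, hval]
  have hvee : (e : (Function.End σ)ᵐᵒᵖ) * e = e := by
    have := congrArg (Subtype.val) hee
    simpa using this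
  have huhhv : ul ++ (h ++ h) ++ vr ∈ X := by
    refine (hkey ul (h ++ h) h vr ?_).mpr huhv
    rw [hφapp, hh]
    exact hvee
  -- list manipulation
  have hflat : ∀ (k : ℕ),
      (List.replicate (k + 1) (h ++ (vr ++ ul) ++ h)).flatten
        = (h ++ vr) ++
          ((List.replicate k (ul ++ (h ++ h) ++ vr)).flatten ++ (ul ++ h)) := by
    intro k
    induction k with
    | zero => simp
    | succ k ih =>
      rw [List.replicate_succ, List.flatten_cons, ih, List.replicate_succ,
        List.flatten_cons]
      simp [List.append_assoc]
  set Z : List A :=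
    ul ++ (List.replicate (n₀ + 1) (h ++ (vr ++ ul) ++ h)).flatten ++ vr with hZ
  set L : List (List A) :=
    (ul ++ h ++ vr) :: (List.replicate n₀ (ul ++ (h ++ h) ++ vr)
      ++ [ul ++ h ++ vr]) with hL
  have hLmem : ∀ y ∈ L, y ∈ X := by
    intro y hy
    rw [hL] at hy
    simp only [List.mem_cons, List.mem_append, List.mem_replicate,
      List.mem_singleton, List.not_mem_nil, or_false] at hy
    rcases hy with rfl | hy'
    · exact huhv
    rcases hy' with ⟨-, rfl⟩ | rfl
    · exact huhhv
    · exact huhv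
  have hflateq : ([Z] : List (List A)).flatten = L.flatten := by
    rw [hZ, hL]
    simp only [List.flatten_cons, List.flatten_nil, List.flatten_append,
      List.append_nil]
    rw [hflat n₀]
    simp [List.append_assoc]
  have heq := hcode [Z] L
    (by intro y hy; simp only [List.mem_singleton] at hy; rw [hy]; exact hZX)
    hLmem hflateq
  have hlen := congrArg List.length heq
  rw [hL] at hlen
  simp at hlen
end

section
/- Let A be a finite alphabet, let F ⊆ A* be a recurrent set, and let X be a bifix code contained in F with finite F-degree d = d_F(X). Let w ∈ F be a word with δ_X(w) = d. Then for every state q of the minimal automaton of X* such that q = p·w for some state p (with p·w defined), there exists a unique word v such that v is a proper prefix of some element of X, v is a suffix of w, and q = i·v, where i is the initial state of the minimal automaton of X*. -/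
section AuxStmt16
open PaperDefs

variable {A : Type*} {X : Set (List A)}

private lemma star_append' {x y : List A} (hx : x ∈ star X) (hy : y ∈ star X) :
    x ++ y ∈ star X := by
  obtain ⟨l, hl, rfl⟩ := hx
  obtain ⟨m, hm, rfl⟩ := hy
  refine ⟨l ++ m, ?_, by simp⟩
  intro u hu
  rcases List.mem_append.mp hu with h | h
  exacts [hl u h, hm u h]

private lemma nil_mem_star' : ([] : List A) ∈ star X := ⟨[], by simp, rfl⟩

private lemma mem_star_of_mem' {x : List A} (h : x ∈ X) : x ∈ star X :=
  ⟨[x], by simpa using h, by simp⟩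

private lemma star_last' (hne : ∀ w ∈ X, w ≠ []) {m : List A} (h : m ∈ star X) (hm : m ≠ []) :
    ∃ m₀ y, m₀ ∈ star X ∧ y ∈ X ∧ m = m₀ ++ y := by
  obtain ⟨l, hl, rfl⟩ := h
  rcases List.eq_nil_or_concat l with rfl | ⟨l', y, rfl⟩
  · simp at hm
  · refine ⟨l'.flatten, y, ⟨l', fun u hu => hl u (by simp [List.concat_eq_append, hu]), rfl⟩,
      hl y (by simp [List.concat_eq_append]), by simp [List.concat_eq_append]⟩

private lemma star_first' (hne : ∀ w ∈ X, w ≠ []) {m : List A} (h : m ∈ star X) (hm : m ≠ []) :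
    ∃ y m₀, y ∈ X ∧ m₀ ∈ star X ∧ m = y ++ m₀ := by
  obtain ⟨l, hl, rfl⟩ := h
  rcases l with _ | ⟨y, l'⟩
  · simp at hm
  · exact ⟨y, l'.flatten, hl y (by simp), ⟨l', fun u hu => hl u (by simp [hu]), rfl⟩, by simp⟩

/-- right cancellation in `X*` for a suffix code. -/
private lemma right_cancel' (hX : IsSuffixCode X) :
    ∀ l : List (List A), (∀ u ∈ l, u ∈ X) → ∀ t : List A,
      t ++ l.flatten ∈ star X → t ∈ star X := by
  intro l
  induction l using List.reverseRecOn with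
  | nil => intro _ t ht; simpa using ht
  | append_singleton l' y ih =>
    intro hl t ht
    have hy : y ∈ X := hl y (by simp)
    have hyne : y ≠ [] := hX.2.1 y hy
    have hne : ∀ w ∈ X, w ≠ [] := hX.2.1
    have hmem : t ++ l'.flatten ++ y ∈ star X := by
      simpa [List.append_assoc] using ht
    obtain ⟨m₀, y', hm₀, hy', heq⟩ := star_last' hne hmem (by
      intro h
      have hlen := congrArg List.length h
      simp only [List.length_append, List.length_nil] at hlen
      exact hyne (List.eq_nil_of_length_eq_zero (by omega)))
    have hsuf1 : y <:+ t ++ l'.flatten ++ y := ⟨t ++ l'.flatten, rfl⟩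
    have hsuf2 : y' <:+ t ++ l'.flatten ++ y := ⟨m₀, heq.symm⟩
    have hyy : y = y' := by
      rcases List.suffix_or_suffix_of_suffix hsuf1 hsuf2 with h | h
      · exact hX.2.2 y hy y' hy' h
      · exact (hX.2.2 y' hy' y hy h).symm
    subst hyy
    have : t ++ l'.flatten = m₀ := List.append_cancel_right heq
    exact ih (fun u hu => hl u (by simp [hu])) t (this ▸ hm₀)

private lemma right_cancel (hX : IsSuffixCode X) {m t : List A}
    (hm : m ∈ star X) (h : t ++ m ∈ star X) : t ∈ star X := by
  obtain ⟨l, hl, rfl⟩ := hm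
  exact right_cancel' hX l hl t h

/-- left cancellation in `X*` for a prefix code. -/
private lemma left_cancel' (hX : IsPrefixCode X) :
    ∀ l : List (List A), (∀ u ∈ l, u ∈ X) → ∀ t : List A,
      l.flatten ++ t ∈ star X → t ∈ star X := by
  intro l
  induction l with
  | nil => intro _ t ht; simpa using ht
  | cons y l' ih =>
    intro hl t ht
    have hy : y ∈ X := hl y (by simp)
    have hyne : y ≠ [] := hX.2.1 y hy
    have hne : ∀ w ∈ X, w ≠ [] := hX.2.1
    have hmem : y ++ (l'.flatten ++ t) ∈ star X := by
      simpa [List.append_assoc] using ht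
    obtain ⟨y', m₀, hy', hm₀, heq⟩ := star_first' hne hmem (by
      intro h
      rcases List.append_eq_nil_iff.mp h with ⟨h1, _⟩
      exact hyne h1)
    have hpre1 : y <+: y ++ (l'.flatten ++ t) := ⟨l'.flatten ++ t, rfl⟩
    have hpre2 : y' <+: y ++ (l'.flatten ++ t) := ⟨m₀, heq.symm⟩
    have hyy : y = y' := by
      rcases List.prefix_or_prefix_of_prefix hpre1 hpre2 with h | h
      · exact hX.2.2 y hy y' hy' h
      · exact (hX.2.2 y' hy' y hy h).symm
    subst hyy
    have : l'.flatten ++ t = m₀ := List.append_cancel_left heq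
    exact ih (fun u hu => hl u (by simp [hu])) t (this ▸ hm₀)

private lemma left_cancel (hX : IsPrefixCode X) {x t : List A}
    (hx : x ∈ star X) (h : x ++ t ∈ star X) : t ∈ star X := by
  obtain ⟨l, hl, rfl⟩ := hx
  exact left_cancel' hX l hl t h

/-- existence of the `(no-suffix) ++ (star)` decomposition. -/
private lemma exists_decompS_aux (hne : ∀ w ∈ X, w ≠ []) :
    ∀ n : ℕ, ∀ m : List A, m.length ≤ n →
      ∃ a x : List A, m = a ++ x ∧ x ∈ star X ∧ ¬ ∃ s ∈ X, s <:+ a := by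
  intro n
  induction n with
  | zero =>
    intro m hm
    have : m = [] := List.eq_nil_of_length_eq_zero (Nat.le_zero.mp hm)
    subst this
    refine ⟨[], [], by simp, nil_mem_star', ?_⟩
    rintro ⟨s, hs, hsuf⟩
    exact hne s hs (List.suffix_nil.mp hsuf)
  | succ n ih =>
    intro m hm
    by_cases h : ∃ s ∈ X, s <:+ m
    · obtain ⟨y, hy, m', rfl⟩ := h
      have hy1 : 1 ≤ y.length := by
        rcases Nat.eq_zero_or_pos y.length with h0 | h0
        · exact absurd (List.eq_nil_of_length_eq_zero h0) (hne y hy)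
        · exact h0
      have hm' : m'.length ≤ n := by
        have := hm
        simp only [List.length_append] at this
        omega
      obtain ⟨a, x, rfl, hx, ha⟩ := ih m' hm'
      exact ⟨a, x ++ y, by simp, star_append' hx (mem_star_of_mem' hy), ha⟩
    · exact ⟨m, [], by simp, nil_mem_star', h⟩

private lemma exists_decompS (hne : ∀ w ∈ X, w ≠ []) (m : List A) :
    ∃ a x : List A, m = a ++ x ∧ x ∈ star X ∧ ¬ ∃ s ∈ X, s <:+ a :=
  exists_decompS_aux hne m.length m le_rfl

/-- a nonempty element of `X*` has a suffix in `X`. -/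
private lemma star_suffix (hne : ∀ w ∈ X, w ≠ []) {t : List A} (ht : t ∈ star X)
    (htne : t ≠ []) : ∃ s ∈ X, s <:+ t := by
  obtain ⟨m₀, y, _, hy, rfl⟩ := star_last' hne ht htne
  exact ⟨y, hy, m₀, rfl⟩

private lemma star_prefix (hne : ∀ w ∈ X, w ≠ []) {t : List A} (ht : t ∈ star X)
    (htne : t ≠ []) : ∃ s ∈ X, s <+: t := by
  obtain ⟨y, m₀, hy, _, rfl⟩ := star_first' hne ht htne
  exact ⟨y, hy, m₀, rfl⟩

/-- uniqueness of the decomposition, asymmetric version. -/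
private lemma uniq_decompS_aux (hX : IsSuffixCode X) {a a' x x' : List A}
    (hx : x ∈ star X) (hx' : x' ∈ star X) (ha : ¬ ∃ s ∈ X, s <:+ a)
    (h : a ++ x = a' ++ x') (hsub : x <:+ x') : a = a' ∧ x = x' := by
  obtain ⟨t, rfl⟩ := hsub
  have hts : t ∈ star X := right_cancel hX hx hx'
  rcases eq_or_ne t [] with rfl | htne
  · constructor
    · have h' : a ++ x = a' ++ x := by simpa using h
      exact List.append_cancel_right h'
    · simp
  · exfalso
    obtain ⟨s, hs, hst⟩ := star_suffix hX.2.1 hts htne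
    have haa : a = a' ++ t := by
      have := h
      rw [← List.append_assoc] at this
      exact List.append_cancel_right this
    exact ha ⟨s, hs, hst.trans (haa ▸ ⟨a', rfl⟩)⟩

private lemma uniq_decompS (hX : IsSuffixCode X) {a a' x x' : List A}
    (hx : x ∈ star X) (hx' : x' ∈ star X) (ha : ¬ ∃ s ∈ X, s <:+ a)
    (ha' : ¬ ∃ s ∈ X, s <:+ a') (h : a ++ x = a' ++ x') : a = a' ∧ x = x' := by
  have hx3 : x <:+ a ++ x := ⟨a, rfl⟩
  have hx4 : x' <:+ a ++ x := h ▸ ⟨a', rfl⟩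
  rcases List.suffix_or_suffix_of_suffix hx3 hx4 with hs | hs
  · exact uniq_decompS_aux hX hx hx' ha h hs
  · obtain ⟨h1, h2⟩ := uniq_decompS_aux hX hx' hx ha' h.symm hs
    exact ⟨h1.symm, h2.symm⟩

/-- the suffixes of `m` with no prefix in `X`. -/
private def SuffNoPre (X : Set (List A)) (m : List A) : Set (List A) :=
  {c | c <:+ m ∧ ¬ ∃ s ∈ X, s <+: c}

private lemma delta_eq_card (hX : IsSuffixCode X) (m : List A) :
    delta X m = (SuffNoPre X m).ncard := by
  have hbij : Set.BijOn (fun p : List A × List A × List A => p.2.2)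
      {p | IsParse X m p} (SuffNoPre X m) := by
    refine ⟨?_, ?_, ?_⟩
    · rintro ⟨a, b, c⟩ ⟨heq, _, _, hc⟩
      exact ⟨⟨a ++ b, heq⟩, hc⟩
    · rintro ⟨a, b, c⟩ ⟨heq, ha, hb, _⟩ ⟨a', b', c'⟩ ⟨heq', ha', hb', _⟩ hcc
      have hcc' : c = c' := hcc
      subst hcc'
      have h2 : (a ++ b) ++ c = (a' ++ b') ++ c := by
        simpa [List.append_assoc] using heq.trans heq'.symm
      have h3 := List.append_cancel_right h2
      obtain ⟨h4, h5⟩ := uniq_decompS hX hb hb' ha ha' h3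
      simp only [Prod.mk.injEq]
      exact ⟨h4, h5, trivial⟩
    · rintro c ⟨⟨m', rfl⟩, hc⟩
      obtain ⟨a, x, rfl, hx, ha⟩ := exists_decompS hX.2.1 m'
      exact ⟨(a, x, c), ⟨by simp [List.append_assoc], ha, hx, hc⟩, rfl⟩
  rw [delta, ← hbij.image_eq, Set.ncard_image_of_injOn hbij.injOn]

private lemma suffixes_finite (m : List A) : {c : List A | c <:+ m}.Finite :=
  Set.Finite.subset m.tails.finite_toSet
    (fun c hc => by simpa [List.mem_tails] using hc)

private lemma delta_lt (hX : IsSuffixCode X) {w t : List A} (ht : t ≠ [])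
    (hnp : ¬ ∃ s ∈ X, s <+: t ++ w) : delta X w < delta X (t ++ w) := by
  rw [delta_eq_card hX, delta_eq_card hX]
  apply Set.ncard_lt_ncard
  · constructor
    · rintro c ⟨hc1, hc2⟩
      exact ⟨hc1.trans ⟨t, rfl⟩, hc2⟩
    · intro hsub
      have hmem : t ++ w ∈ SuffNoPre X (t ++ w) := ⟨List.suffix_refl _, hnp⟩
      have : t ++ w ∈ SuffNoPre X w := hsub hmem
      have hlen := this.1.length_le
      simp at hlen
      exact ht hlen
  · exact Set.Finite.subset (suffixes_finite (t ++ w)) (fun c hc => hc.1)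

/-- decomposition of a prefix of `X*` as `(star) ++ (proper prefix of X)`. -/
private lemma prefix_star_decomp (hX : IsPrefixCode X) :
    ∀ l : List (List A), (∀ y ∈ l, y ∈ X) → ∀ u : List A, u <+: l.flatten →
      ∃ x v : List A, u = x ++ v ∧ x ∈ star X ∧ ∃ z ∈ X, v <+: z ∧ v ≠ z := by
  intro l
  induction l with
  | nil =>
    intro _ u hu
    obtain ⟨z, hz⟩ := hX.1
    rw [List.flatten_nil, List.prefix_nil] at hu
    exact ⟨[], [], by simp [hu], nil_mem_star', z, hz, by simp, fun h => hX.2.1 z hz h.symm⟩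
  | cons z l' ih =>
    intro hl u hu
    have hz : z ∈ X := hl z (by simp)
    by_cases hzu : z <+: u
    · obtain ⟨u', rfl⟩ := hzu
      have : u' <+: l'.flatten := by
        rw [List.flatten_cons] at hu
        exact (List.prefix_append_right_inj z).mp hu
      obtain ⟨x, v, rfl, hx, hzv⟩ := ih (fun y hy => hl y (by simp [hy])) u' this
      exact ⟨z ++ x, v, by simp, star_append' (mem_star_of_mem' hz) hx, hzv⟩
    · have huz : u <+: z := by
        rcases List.prefix_or_prefix_of_prefix hu (by
          rw [List.flatten_cons]; exact ⟨l'.flatten, rfl⟩ : z <+: (z :: l').flatten) with h | h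
        · exact h
        · exact absurd h hzu
      exact ⟨[], u, by simp, nil_mem_star', z, hz, huz, fun h => hzu (h ▸ List.prefix_refl z)⟩

private lemma leftQuot_star_append (hX : IsPrefixCode X) {x : List A} (hx : x ∈ star X)
    (v : List A) : leftQuot (star X) (x ++ v) = leftQuot (star X) v := by
  ext s
  simp only [leftQuot, Set.mem_setOf_eq, List.append_assoc]
  constructor
  · intro h; exact left_cancel hX hx h
  · intro h; exact star_append' hx h

/-- proper prefixes of `X` have no prefix in `X`. -/
private lemma no_prefix_of_proper (hX : IsPrefixCode X) {v z : List A} (hz : z ∈ X)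
    (hvz : v <+: z) (hne : v ≠ z) : ¬ ∃ s ∈ X, s <+: v := by
  rintro ⟨s, hs, hsv⟩
  have hsz : s = z := hX.2.2 s hs z hz (hsv.trans hvz)
  subst hsz
  have h1 : v.length < s.length := by
    obtain ⟨t, rfl⟩ := hvz
    rcases t with _ | _ <;> simp_all
  have h2 : s.length ≤ v.length := hsv.length_le
  omega

end AuxStmt16

section AuxStmt16b
open PaperDefs
variable {A : Type*} {X : Set (List A)}

private lemma eq_of_same_quot (hXP : IsPrefixCode X) (hXS : IsSuffixCode X)
    {v₁ v₂ : List A} (h12 : v₁ <:+ v₂)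
    (h2 : ∃ z ∈ X, v₂ <+: z ∧ v₂ ≠ z)
    (hq : leftQuot (star X) v₁ = leftQuot (star X) v₂)
    (hne : (leftQuot (star X) v₁).Nonempty) : v₁ = v₂ := by
  obtain ⟨t, rfl⟩ := h12
  obtain ⟨s, hs⟩ := hne
  have h1 : v₁ ++ s ∈ star X := hs
  have h2' : t ++ (v₁ ++ s) ∈ star X := by
    have : s ∈ leftQuot (star X) (t ++ v₁) := hq ▸ hs
    simpa [leftQuot, List.append_assoc] using this
  have hts : t ∈ star X := right_cancel hXS h1 h2'
  rcases eq_or_ne t [] with rfl | htne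
  · simp
  · exfalso
    obtain ⟨y, hy, hyt⟩ := star_prefix hXS.2.1 hts htne
    obtain ⟨z, hz, hvz, hvne⟩ := h2
    exact no_prefix_of_proper hXP hz hvz hvne ⟨y, hy, hyt.trans ⟨v₁, rfl⟩⟩

end AuxStmt16b

open PaperDefs in
theorem stmt_16 {A : Type} [Fintype A]
    (F X : Set (List A)) (hF : Recurrent F)
    (hX : IsBifixCode X) (hXF : X ⊆ F)
    (d : ℕ) (hd : Fdeg X F = (d : ℕ∞))
    (w : List A) (hw : w ∈ F) (hδ : delta X w = d) :
    ∀ q : Set (List A),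
      (∃ p ∈ MinStates (star X), (stepW p w).Nonempty ∧ q = stepW p w) →
      ∃! v : List A,
        (∃ x ∈ X, v <+: x ∧ v ≠ x) ∧ v <:+ w ∧ q = leftQuot (star X) v := by
  obtain ⟨hXP, hXS⟩ := hX
  rintro q ⟨p, ⟨hpne, u, rfl⟩, hqne, rfl⟩
  have hstep : stepW (leftQuot (star X) u) w = leftQuot (star X) (u ++ w) := by
    ext s; simp [stepW, leftQuot, List.append_assoc]
  obtain ⟨s, hs⟩ := hqne
  have hus : (u ++ w) ++ s ∈ star X := by
    have h := hs; rw [hstep] at h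
    simpa [leftQuot, List.append_assoc] using h
  obtain ⟨l, hl, hfl⟩ := hus
  have hpref : u ++ w <+: l.flatten := ⟨s, hfl.symm⟩
  obtain ⟨x, v, heq, hx, z, hz, hvz, hvne⟩ := prefix_star_decomp hXP l hl (u ++ w) hpref
  have hquv : leftQuot (star X) (u ++ w) = leftQuot (star X) v := by
    rw [heq]; exact leftQuot_star_append hXP hx v
  have hqv : stepW (leftQuot (star X) u) w = leftQuot (star X) v := hstep.trans hquv
  have hsufv : v <:+ u ++ w := ⟨x, heq.symm⟩
  have hvw : v <:+ w := by
    rcases List.suffix_or_suffix_of_suffix hsufv (⟨u, rfl⟩ : w <:+ u ++ w) with h | h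
    · exact h
    · obtain ⟨t, rfl⟩ := h
      rcases eq_or_ne t [] with rfl | htne
      · simp
      · exfalso
        have hvF : t ++ w ∈ F := hF.1 z (hXF hz) (t ++ w) hvz.isInfix
        have hlt := delta_lt hXS htne (no_prefix_of_proper hXP hz hvz hvne)
        have hle : (delta X (t ++ w) : ℕ∞) ≤ Fdeg X F :=
          le_iSup₂ (f := fun (m : List A) (_ : m ∈ F) => ((delta X m : ℕ∞))) (t ++ w) hvF
        rw [hd] at hle
        have hled : delta X (t ++ w) ≤ d := by exact_mod_cast hle
        omega
  refine ⟨v, ⟨⟨z, hz, hvz, hvne⟩, hvw, hqv⟩, ?_⟩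
  rintro v' ⟨⟨z', hz', hvz', hvne'⟩, hvw', hq'⟩
  have hqv' : leftQuot (star X) v' = leftQuot (star X) v := hq'.symm.trans hqv
  have hne1 : (leftQuot (star X) v).Nonempty := by
    rw [← hqv]; exact ⟨s, hs⟩
  rcases List.suffix_or_suffix_of_suffix hvw' hvw with h | h
  · exact eq_of_same_quot hXP hXS h ⟨z, hz, hvz, hvne⟩ hqv' (hqv' ▸ hne1)
  · exact (eq_of_same_quot hXP hXS h ⟨z', hz', hvz', hvne'⟩ hqv'.symm hne1).symm
end

section
/- Let A be a nonempty finite alphabet and let Z be a group code over A. Then Z is a rational maximal bifix code, its degree d(Z) is finite, and d(Z) equals the number of states of the minimal automaton of Z*. -/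
/-! Let `S = {w | α w q₀ = q₀} = Z*`, so that `Z` is the set of irreducible elements of `S`.
Since `S` is closed under left and right cancellation, `Z` is a bifix code, and since every word
can be completed into a word of `S`, every word is comparable in the prefix order with some
element of `Z`, which makes `Z` a maximal prefix code. `S` is recognized by the automaton on the
permutations of `Q`, and `Z`, the set of first returns to `S`, by adding two flags to it.

A parse `(v, x, u)` of `w` is determined by `v`, since `Z` is a prefix code. On the prefixes `v`
of `w` without a suffix in `Z`, the map `v ↦ α v q₀` is injective: two such prefixes with the same
image differ by a word of `S`, which would have a suffix in `Z`. Hence `δ_Z(w) ≤ |Q|`, with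
equality for a word whose prefixes reach every point of `Q` (the shortest prefix reaching a point
has no suffix in `Z`). Finally the left quotients of `S` are the fibres `{w | α w q₀ = q}`, one
for each point `q`. -/

namespace PaperDefs

variable {A : Type*}

def irreducibles (S : Set (List A)) : Set (List A) :=
  {w | w ∈ S ∧ w ≠ [] ∧ ¬ ∃ u v : List A, u ≠ [] ∧ v ≠ [] ∧ u ∈ S ∧ v ∈ S ∧ w = u ++ v}

theorem exists_irreducibles_prefix {S : Set (List A)} {w : List A} (hw : w ∈ S) (hne : w ≠ []) :
    ∃ z ∈ irreducibles S, z <+: w := by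
  by_cases hirr : w ∈ irreducibles S
  · exact ⟨w, hirr, List.prefix_refl w⟩
  obtain ⟨u, v, hu, hv, huS, -, rfl⟩ :
      ∃ u v : List A, u ≠ [] ∧ v ≠ [] ∧ u ∈ S ∧ v ∈ S ∧ w = u ++ v := by
    simpa [irreducibles, hw, hne] using hirr
  obtain ⟨z, hz, hzu⟩ := exists_irreducibles_prefix huS hu
  exact ⟨z, hz, hzu.trans (List.prefix_append u v)⟩
termination_by w.length
decreasing_by subst_vars; simpa using List.length_pos_iff.mpr hv

theorem exists_irreducibles_suffix {S : Set (List A)} {w : List A} (hw : w ∈ S) (hne : w ≠ []) :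
    ∃ z ∈ irreducibles S, z <:+ w := by
  by_cases hirr : w ∈ irreducibles S
  · exact ⟨w, hirr, List.suffix_refl w⟩
  obtain ⟨u, v, hu, hv, -, hvS, rfl⟩ :
      ∃ u v : List A, u ≠ [] ∧ v ≠ [] ∧ u ∈ S ∧ v ∈ S ∧ w = u ++ v := by
    simpa [irreducibles, hw, hne] using hirr
  obtain ⟨z, hz, hzv⟩ := exists_irreducibles_suffix hvS hv
  exact ⟨z, hz, hzv.trans (List.suffix_append u v)⟩
termination_by w.length
decreasing_by subst_vars; simpa using List.length_pos_iff.mpr hu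

theorem eq_of_irreducibles_suffix {S : Set (List A)} (hS : ∀ u v, u ++ v ∈ S → v ∈ S → u ∈ S)
    {u v : List A} (hu : u ∈ irreducibles S) (hv : v ∈ irreducibles S) (huv : u <:+ v) :
    u = v := by
  obtain ⟨s, rfl⟩ := huv
  rcases eq_or_ne s [] with rfl | hs
  · rfl
  · exact absurd ⟨s, u, hs, hu.2.1, hS s u hv.1 hu.1, hu.1, rfl⟩ hv.2.2

theorem eq_irreducibles_of_isPrefixCode {S : Set (List A)} (hS : ∀ y, ∃ v, y ++ v ∈ S)
    {Y : Set (List A)} (hY : IsPrefixCode Y) (hsub : irreducibles S ⊆ Y) :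
    Y = irreducibles S := by
  refine (Set.Subset.antisymm ?_ hsub)
  intro y hy
  obtain ⟨v, hv⟩ := hS y
  obtain ⟨z, hz, hzp⟩ := exists_irreducibles_prefix hv (by simp [hY.2.1 y hy])
  rcases List.prefix_or_prefix_of_prefix (List.prefix_append y v) hzp with h | h
  · rwa [hY.2.2 y hy z (hsub hz) h]
  · rwa [← hY.2.2 z (hsub hz) y hy h]

theorem isFMaximalBifixCode_univ_irreducibles {S : Set (List A)}
    (hpre : IsPrefixCode (irreducibles S)) (hcancel : ∀ u v, u ++ v ∈ S → v ∈ S → u ∈ S)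
    (hdense : ∀ y, ∃ v, y ++ v ∈ S) : IsFMaximalBifixCode Set.univ (irreducibles S) :=
  ⟨⟨hpre, hpre.1, hpre.2.1, fun _ hu _ hv => eq_of_irreducibles_suffix hcancel hu hv⟩,
    Set.subset_univ _, fun _ hY _ hsub => eq_irreducibles_of_isPrefixCode hdense hY.1 hsub⟩

section Rational

variable {σ : Type*}

theorem prefix_concat_and_ne_iff {u w : List A} {a : A} :
    u <+: w ++ [a] ∧ u ≠ w ++ [a] ↔ u <+: w := by
  rw [List.prefix_concat_iff]
  constructor
  · rintro ⟨h | h, hne⟩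
    · exact absurd h hne
    · exact h
  · intro h
    refine ⟨Or.inr h, fun heq => ?_⟩
    simpa [heq] using h.length_le

def firstAcceptDFA (M : DFA A σ) : DFA A (σ × Prop × Prop) where
  step p a := (M.step p.1 a, p.2.1 ∨ (p.2.2 ∧ p.1 ∈ M.accept), True)
  start := (M.start, False, False)
  accept := {p | p.1 ∈ M.accept ∧ ¬ p.2.1 ∧ p.2.2}

theorem firstAcceptDFA_eval (M : DFA A σ) (w : List A) :
    (firstAcceptDFA M).eval w =
      (M.eval w, (∃ u, u ≠ [] ∧ u ∈ M.accepts ∧ u <+: w ∧ u ≠ w), w ≠ []) := by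
  induction w using List.reverseRecOn with
  | nil => simp [firstAcceptDFA]
  | append_singleton w a ih =>
    rw [DFA.eval_append_singleton, ih]
    simp only [firstAcceptDFA, DFA.eval_append_singleton, ne_eq, List.append_eq_nil_iff,
      List.cons_ne_self, and_false, not_false_eq_true, prefix_concat_and_ne_iff, Prod.mk.injEq,
      true_and]
    refine ⟨propext ⟨?_, ?_⟩, trivial⟩
    · rintro (⟨u, hu, hacc, hpre, -⟩ | ⟨hne, hacc⟩)
      · exact ⟨u, hu, hacc, hpre⟩
      · exact ⟨w, hne, hacc, List.prefix_refl w⟩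
    · rintro ⟨u, hu, hacc, hpre⟩
      by_cases huw : u = w
      · exact Or.inr ⟨huw ▸ hu, huw ▸ hacc⟩
      · exact Or.inl ⟨u, hu, hacc, hpre, huw⟩

theorem mem_irreducibles_iff {S : Set (List A)} (hS : ∀ u v, u ∈ S → u ++ v ∈ S → v ∈ S)
    {w : List A} :
    w ∈ irreducibles S ↔ w ∈ S ∧ ¬ (∃ u, u ≠ [] ∧ u ∈ S ∧ u <+: w ∧ u ≠ w) ∧ w ≠ [] := by
  constructor
  · rintro ⟨hw, hne, hirr⟩
    refine ⟨hw, ?_, hne⟩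
    rintro ⟨u, hu, huS, ⟨v, rfl⟩, huw⟩
    exact hirr ⟨u, v, hu, by simpa using huw, huS, hS u v huS hw, rfl⟩
  · rintro ⟨hw, hmin, hne⟩
    refine ⟨hw, hne, ?_⟩
    rintro ⟨u, v, hu, hv, huS, -, rfl⟩
    exact hmin ⟨u, hu, huS, List.prefix_append u v, by simpa using hv⟩

theorem isRational_irreducibles {S : Set (List A)} (hrat : IsRational S)
    (hS : ∀ u v, u ∈ S → u ++ v ∈ S → v ∈ S) : IsRational (irreducibles S) := by
  obtain ⟨σ, _, M, hM⟩ := hrat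
  refine ⟨σ × Prop × Prop, inferInstance, firstAcceptDFA M, fun w => ?_⟩
  have hMS : ∀ u, u ∈ M.accepts ↔ u ∈ S := hM
  simp only [DFA.mem_accepts, firstAcceptDFA_eval, mem_irreducibles_iff hS, ← hMS]
  rfl

end Rational

section Parses

variable {X : Set (List A)}

theorem exists_flatten_append_not_prefix (hX : ∀ x ∈ X, x ≠ []) (r : List A) :
    ∃ (l : List (List A)) (u : List A),
      (∀ x ∈ l, x ∈ X) ∧ l.flatten ++ u = r ∧ ¬ ∃ s ∈ X, s <+: u := by
  by_cases h : ∃ s ∈ X, s <+: r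
  · obtain ⟨x, hx, t, rfl⟩ := h
    obtain ⟨l, u, hl, rfl, hu⟩ := exists_flatten_append_not_prefix hX t
    refine ⟨x :: l, u, ?_, by simp, hu⟩
    simpa [hx] using hl
  · exact ⟨[], r, by simp, by simp, h⟩
termination_by r.length
decreasing_by subst_vars; simpa using List.length_pos_iff.mpr (hX x hx)

theorem IsPrefixCode.eq_of_flatten_append_eq (hX : IsPrefixCode X) {l l' : List (List A)}
    {u u' : List A} (hl : ∀ x ∈ l, x ∈ X) (hl' : ∀ x ∈ l', x ∈ X)
    (hu : ¬ ∃ s ∈ X, s <+: u) (hu' : ¬ ∃ s ∈ X, s <+: u')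
    (h : l.flatten ++ u = l'.flatten ++ u') : u = u' := by
  induction l generalizing l' with
  | nil =>
    cases l' with
    | nil => simpa using h
    | cons x' t' =>
      exact absurd ⟨x', hl' x' (by simp), t'.flatten ++ u', by simpa using h.symm⟩ hu
  | cons x t ih =>
    cases l' with
    | nil => exact absurd ⟨x, hl x (by simp), t.flatten ++ u, by simpa using h⟩ hu'
    | cons x' t' =>
      simp only [List.flatten_cons, List.append_assoc] at h
      have hxx' : x = x' := by
        rcases List.prefix_or_prefix_of_prefix ⟨_, h⟩ ⟨_, rfl⟩ with hp | hp
        · exact hX.2.2 x (hl x (by simp)) x' (hl' x' (by simp)) hp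
        · exact (hX.2.2 x' (hl' x' (by simp)) x (hl x (by simp)) hp).symm
      subst hxx'
      exact ih (fun y hy => hl y (by simp [hy])) (fun y hy => hl' y (by simp [hy]))
        (List.append_cancel_left h)

theorem IsPrefixCode.delta_eq_ncard (hX : IsPrefixCode X) (w : List A) :
    delta X w = {v | v <+: w ∧ ¬ ∃ s ∈ X, s <:+ v}.ncard := by
  have hinj : Set.InjOn Prod.fst {p | IsParse X w p} := by
    rintro ⟨v, x, u⟩ ⟨hw, -, ⟨l, hl, rfl⟩, hu⟩ ⟨v', x', u'⟩ ⟨hw', -, ⟨l', hl', rfl⟩, hu'⟩ rfl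
    have h : l.flatten ++ u = l'.flatten ++ u' := by
      simpa only [List.append_assoc, List.append_cancel_left_eq] using hw.trans hw'.symm
    obtain rfl := hX.eq_of_flatten_append_eq hl hl' hu hu' h
    simp [List.append_cancel_right h]
  have himage : Prod.fst '' {p | IsParse X w p} = {v | v <+: w ∧ ¬ ∃ s ∈ X, s <:+ v} := by
    ext v
    constructor
    · rintro ⟨⟨v, x, u⟩, ⟨hw, hv, -⟩, rfl⟩
      exact ⟨⟨x ++ u, by simpa [List.append_assoc] using hw⟩, hv⟩
    · rintro ⟨⟨r, rfl⟩, hv⟩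
      obtain ⟨l, u, hl, rfl, hu⟩ := exists_flatten_append_not_prefix hX.2.1 r
      exact ⟨(v, l.flatten, u), ⟨by simp, hv, ⟨l, hl, rfl⟩, hu⟩, rfl⟩
  rw [delta, ← himage, hinj.ncard_image]

end Parses

theorem isRational_stabilizer {Q : Type} [Finite Q] {α : List A → Equiv.Perm Q}
    (h1 : α [] = 1) (hα : ∀ u v, α (u ++ v) = α u * α v) (q₀ : Q) :
    IsRational {w | α w q₀ = q₀} := by
  have := Fintype.ofFinite Q
  classical
  let M : DFA A (Equiv.Perm Q) := ⟨fun g a => g * α [a], 1, {g | g q₀ = q₀}⟩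
  have heval : ∀ w, M.eval w = α w := by
    intro w
    induction w using List.reverseRecOn with
    | nil => exact h1.symm
    | append_singleton w a ih => rw [DFA.eval_append_singleton, ih, hα]
  exact ⟨Equiv.Perm Q, inferInstance, M, fun w => by rw [DFA.mem_accepts, heval]; rfl⟩

section Stabilizer

variable {Q : Type*} {α : List A → Equiv.Perm Q} (hα : ∀ u v, α (u ++ v) = α u * α v) {q₀ : Q}
include hα

theorem apply_append (u v : List A) (q : Q) : α (u ++ v) q = α u (α v q) := by
  rw [hα]; rfl

theorem stabilizer_left_cancel (u v : List A) (hu : α u q₀ = q₀) (huv : α (u ++ v) q₀ = q₀) :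
    α v q₀ = q₀ :=
  (α u).injective (by rw [← apply_append hα, huv, hu])

theorem stabilizer_right_cancel (u v : List A) (huv : α (u ++ v) q₀ = q₀) (hv : α v q₀ = q₀) :
    α u q₀ = q₀ := by
  rwa [apply_append hα, hv] at huv

theorem exists_append_mem_stabilizer (hreach : ∀ q, ∃ w, α w q₀ = q) (y : List A) :
    ∃ v, α (y ++ v) q₀ = q₀ := by
  obtain ⟨v, hv⟩ := hreach ((α y).symm q₀)
  exact ⟨v, by rw [apply_append hα, hv, Equiv.apply_symm_apply]⟩

theorem injOn_apply_of_not_suffix (w : List A) :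
    Set.InjOn (fun v => α v q₀)
      {v | v <+: w ∧ ¬ ∃ s ∈ irreducibles {u | α u q₀ = q₀}, s <:+ v} := by
  have eq_of_prefix : ∀ v v', v <+: v' → α v q₀ = α v' q₀ →
      (¬ ∃ s ∈ irreducibles {u | α u q₀ = q₀}, s <:+ v') → v = v' := by
    rintro v _ ⟨t, rfl⟩ heq hv'
    have ht : α t q₀ = q₀ := (α v).injective (by rw [← apply_append hα, heq])
    rcases eq_or_ne t [] with rfl | htne
    · simp
    · obtain ⟨z, hz, hzt⟩ := exists_irreducibles_suffix (S := {u | α u q₀ = q₀}) ht htne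
      exact absurd ⟨z, hz, hzt.trans (List.suffix_append v t)⟩ hv'
  rintro v ⟨hvw, hv⟩ v' ⟨hv'w, hv'⟩ heq
  rcases List.prefix_or_prefix_of_prefix hvw hv'w with h | h
  · exact eq_of_prefix v v' h heq hv'
  · exact (eq_of_prefix v' v h heq.symm hv).symm

theorem exists_not_suffix_apply_eq {w p : List A} (hp : p <+: w) :
    ∃ v, (v <+: w ∧ ¬ ∃ s ∈ irreducibles {u | α u q₀ = q₀}, s <:+ v) ∧ α v q₀ = α p q₀ := by
  by_cases h : ∃ s ∈ irreducibles {u | α u q₀ = q₀}, s <:+ p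
  · obtain ⟨z, hz, r, rfl⟩ := h
    obtain ⟨v, hv, hvr⟩ := exists_not_suffix_apply_eq ((List.prefix_append r z).trans hp)
    exact ⟨v, hv, by rw [hvr, apply_append hα, hz.1]⟩
  · exact ⟨p, ⟨hp, h⟩, rfl⟩
termination_by p.length
decreasing_by subst_vars; simpa using List.length_pos_iff.mpr hz.2.1

theorem exists_forall_prefix_apply_eq [Finite Q] (hreach : ∀ q, ∃ w, α w q₀ = q) :
    ∃ w, ∀ q, ∃ p, p <+: w ∧ α p q₀ = q := by
  suffices h : ∀ l : List Q, ∃ w, ∀ q ∈ l, ∃ p, p <+: w ∧ α p q₀ = q by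
    obtain ⟨l, -, hl⟩ := Finite.exists_univ_list Q
    obtain ⟨w, hw⟩ := h l
    exact ⟨w, fun q => hw q (hl q)⟩
  intro l
  induction l with
  | nil => exact ⟨[], by simp⟩
  | cons q l ih =>
    obtain ⟨w, hw⟩ := ih
    obtain ⟨v, hv⟩ := hreach ((α w).symm q)
    refine ⟨w ++ v, fun q' hq' => ?_⟩
    rcases List.mem_cons.mp hq' with rfl | hq'
    · exact ⟨w ++ v, List.prefix_refl _, by rw [apply_append hα, hv, Equiv.apply_symm_apply]⟩
    · obtain ⟨p, hp, hpq⟩ := hw q' hq'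
      exact ⟨p, hp.trans (List.prefix_append w v), hpq⟩

theorem leftQuot_stabilizer (u : List A) :
    leftQuot {w | α w q₀ = q₀} u = {w | α w q₀ = (α u).symm q₀} := by
  ext w
  simp [leftQuot, apply_append hα, Equiv.eq_symm_apply]

theorem minStates_stabilizer (htrans : ∀ q q', ∃ w, α w q = q') :
    MinStates {w | α w q₀ = q₀} = Set.range fun q => {w | α w q₀ = q} := by
  ext s
  constructor
  · rintro ⟨-, u, rfl⟩
    exact ⟨_, (leftQuot_stabilizer hα u).symm⟩
  · rintro ⟨q, rfl⟩
    obtain ⟨u, hu⟩ := htrans q q₀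
    refine ⟨htrans q₀ q, u, ?_⟩
    rw [leftQuot_stabilizer hα, ← hu, Equiv.symm_apply_apply]

theorem ncard_minStates_stabilizer [Finite Q] (htrans : ∀ q q', ∃ w, α w q = q') :
    (MinStates {w | α w q₀ = q₀}).ncard = Nat.card Q := by
  have hinj : Function.Injective fun q => {w | α w q₀ = q} := by
    intro q q' h
    obtain ⟨w, hw⟩ := htrans q₀ q
    exact hw.symm.trans (Set.ext_iff.mp h w |>.mp hw)
  rw [minStates_stabilizer hα htrans, ← Set.image_univ, Set.ncard_image_of_injective _ hinj,
    Set.ncard_univ]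

variable [Finite Q] (hpre : IsPrefixCode (irreducibles {u | α u q₀ = q₀}))
include hpre

theorem delta_irreducibles_le (w : List A) :
    delta (irreducibles {u | α u q₀ = q₀}) w ≤ Nat.card Q := by
  rw [hpre.delta_eq_ncard, ← Set.ncard_univ Q]
  exact Set.ncard_le_ncard_of_injOn _ (fun _ _ => Set.mem_univ _) (injOn_apply_of_not_suffix hα w)

theorem exists_delta_irreducibles_eq (hreach : ∀ q, ∃ w, α w q₀ = q) :
    ∃ w, delta (irreducibles {u | α u q₀ = q₀}) w = Nat.card Q := by
  obtain ⟨w, hw⟩ := exists_forall_prefix_apply_eq hα hreach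
  refine ⟨w, ?_⟩
  rw [hpre.delta_eq_ncard, ← Set.ncard_univ Q, ← (injOn_apply_of_not_suffix hα w).ncard_image]
  congr 1
  refine Set.eq_univ_of_forall fun q => ?_
  obtain ⟨p, hp, rfl⟩ := hw q
  exact exists_not_suffix_apply_eq hα hp

theorem deg_irreducibles (hreach : ∀ q, ∃ w, α w q₀ = q) :
    deg (irreducibles {u | α u q₀ = q₀}) = Nat.card Q := by
  obtain ⟨w₀, hw₀⟩ := exists_delta_irreducibles_eq hα hpre hreach
  refine le_antisymm (iSup₂_le fun w _ => ?_) (le_iSup₂_of_le w₀ (Set.mem_univ _) ?_)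
  · exact_mod_cast delta_irreducibles_le hα hpre w
  · rw [hw₀]

end Stabilizer

end PaperDefs

open PaperDefs in
theorem stmt_17_general {A : Type}
    (Z : Set (List A)) (hZ : IsGroupCode Z) :
    IsRational Z ∧ IsFMaximalBifixCode Set.univ Z ∧
    ∃ d : ℕ, deg Z = (d : ℕ∞) ∧ (MinStates (star Z)).ncard = d := by
  obtain ⟨hpre, Q, _, q₀, α, h1, hα, htrans, hstar, hZ⟩ := hZ
  replace hZ : Z = irreducibles {w | α w q₀ = q₀} := hZ
  have hZstar : star Z = {w | α w q₀ = q₀} := Set.ext hstar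
  subst hZ
  refine ⟨?_, ?_, Nat.card Q, ?_, ?_⟩
  · exact isRational_irreducibles (isRational_stabilizer h1 hα q₀)
      (stabilizer_left_cancel hα)
  · exact isFMaximalBifixCode_univ_irreducibles hpre (stabilizer_right_cancel hα)
      (exists_append_mem_stabilizer hα (htrans q₀))
  · exact deg_irreducibles hα hpre (htrans q₀)
  · rw [hZstar]
    exact ncard_minStates_stabilizer hα htrans

open PaperDefs in
theorem stmt_17 {A : Type} [Fintype A] [Nonempty A]
    (Z : Set (List A)) (hZ : IsGroupCode Z) :
    IsRational Z ∧ IsFMaximalBifixCode Set.univ Z ∧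
    ∃ d : ℕ, deg Z = (d : ℕ∞) ∧ (MinStates (star Z)).ncard = d :=
  stmt_17_general Z hZ
end
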